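/- Let X be n-Hausdorff and Y = n-κX the Katětov-type n-H-closed extension of X. If f : Y → Y is a continuous surjection with f(x) = x for all x ∈ X, then f is a homeomorphism. -/

import Mathlib

open Set Topology Function

universe u v

/-- A space is `n`-Hausdorff if any `n` distinct points admit open neighborhoods
with empty intersection. -/
def NHausdorff (X : Type u) [TopologicalSpace X] (n : ℕ) : Prop :=
  ∀ x : Fin n → X, Function.Injective x →
    ∃ U : Fin n → Set X, (∀ i, IsOpen (U i) ∧ x i ∈ U i) ∧ (⋂ i, U i) = (∅ : Set X)

/-- An open filter on `X`: a nonempty family of nonempty open sets closed under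
finite intersections and open supersets. -/
structure IsOpenFilter {X : Type u} [TopologicalSpace X] (F : Set (Set X)) : Prop where
  nonempty : F.Nonempty
  isOpen_mem : ∀ U ∈ F, IsOpen U
  nonempty_mem : ∀ U ∈ F, U.Nonempty
  inter_mem : ∀ U ∈ F, ∀ V ∈ F, U ∩ V ∈ F
  superset_mem : ∀ U ∈ F, ∀ V : Set X, IsOpen V → U ⊆ V → V ∈ F

/-- An open ultrafilter: a maximal open filter. -/
def IsOpenUltrafilter {X : Type u} [TopologicalSpace X] (F : Set (Set X)) : Prop :=
  IsOpenFilter F ∧ ∀ G : Set (Set X), IsOpenFilter G → F ⊆ G → G = F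

/-- The adherence of a family of sets: `⋂ {cl U : U ∈ F}`. -/
def adh {X : Type u} [TopologicalSpace X] (F : Set (Set X)) : Set X :=
  ⋂ U ∈ F, closure U

lemma univ_mem_of_isOpenFilter {X : Type u} [TopologicalSpace X] {F : Set (Set X)}
    (hF : IsOpenFilter F) : Set.univ ∈ F := by
  obtain ⟨U, hU⟩ := hF.nonempty
  exact hF.superset_mem U hU Set.univ isOpen_univ (Set.subset_univ U)

/-- The non-full open ultrafilters on `X`: those with fewer than `n-1` adherent points. -/
def NonFullUlt (X : Type u) [TopologicalSpace X] (n : ℕ) : Type u :=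
  {F : Set (Set X) // IsOpenUltrafilter F ∧ (adh F).encard < (n - 1 : ℕ)}

/-- The points added to `X` to form `n-κX`: for each non-full open ultrafilter `U`,
a set of `n - 1 - |aU|` new points. -/
def KPoints (X : Type u) [TopologicalSpace X] (n : ℕ) : Type u :=
  Σ F : NonFullUlt X n, Fin (n - 1 - (adh F.val).ncard)

/-- The underlying set of the Katětov-type extension `n-κX`. -/
def nKatetov (X : Type u) [TopologicalSpace X] (n : ℕ) : Type u :=
  X ⊕ KPoints X n

/-- The topology of `n-κX`: `V` is open iff `V ∩ X` is open in `X` and each added point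
`p` (associated to the ultrafilter `p.1`) in `V` satisfies `V ∩ X ∈ p.1`. -/
def nKatetovTop (X : Type u) [TopologicalSpace X] (n : ℕ) :
    TopologicalSpace (nKatetov X n) where
  IsOpen V := IsOpen (Sum.inl ⁻¹' V : Set X) ∧
    ∀ p : KPoints X n, Sum.inr p ∈ V → Sum.inl ⁻¹' V ∈ p.1.val
  isOpen_univ := by
    exact ⟨isOpen_univ, fun p _ => univ_mem_of_isOpenFilter p.1.property.1.1⟩
  isOpen_inter := by
    rintro s t ⟨hs1, hs2⟩ ⟨ht1, ht2⟩
    exact ⟨hs1.inter ht1, fun p hp => p.1.property.1.1.inter_mem _ (hs2 p hp.1) _ (ht2 p hp.2)⟩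
  isOpen_sUnion := by
    intro S hS
    have hop : IsOpen (Sum.inl ⁻¹' ⋃₀ S : Set X) := by
      have h : (Sum.inl ⁻¹' ⋃₀ S : Set X) = ⋃ s ∈ S, (Sum.inl ⁻¹' s : Set X) := by
        ext x
        exact ⟨fun ⟨s, hs, hx⟩ => Set.mem_biUnion hs hx,
          fun hx => by obtain ⟨s, hs, hx⟩ := Set.mem_iUnion₂.1 hx; exact ⟨s, hs, hx⟩⟩
      rw [h]
      exact isOpen_biUnion fun s hs => (hS s hs).1
    refine ⟨hop, ?_⟩
    rintro p ⟨s, hsS, hps⟩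
    exact p.1.property.1.1.superset_mem _ ((hS s hsS).2 p hps) _ hop
      (fun x hx => ⟨s, hsS, hx⟩)


/-!
Every continuous self-map of `n-κX` fixing `X` sends an added point `p` over the open ultrafilter
`U` either into `X` or to an added point over an open ultrafilter contained in `U`; by maximality
that ultrafilter is `U` itself. So a surjective such map carries each finite fibre of added
points onto itself and is therefore a bijection on it. Its inverse again fixes `X` and preserves
the fibres, and any map with these two properties is continuous, since membership of an added
point in an open set is governed by the trace of the set on `X` alone.
-/

theorem Set.Finite.bijOn_of_surjOn {α : Type*} {s : Set α} {f : α → α} (hs : s.Finite)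
    (h : SurjOn f s s) : BijOn f s s := by
  have himage : f '' s = s :=
    (eq_of_subset_of_ncard_le h (ncard_image_le hs) (hs.image f)).symm
  exact ⟨mapsTo_iff_image_subset.mpr himage.subset,
    (ncard_image_iff hs).mp (congrArg ncard himage), h⟩

namespace nKatetov

variable {X : Type u} [TopologicalSpace X] {n : ℕ}

attribute [local instance] nKatetovTop

def fiber (F : NonFullUlt X n) : Set (nKatetov X n) :=
  Sum.inr '' (Sigma.fst ⁻¹' {F})

lemma inr_mem_fiber_iff {F : NonFullUlt X n} {p : KPoints X n} :
    (Sum.inr p : nKatetov X n) ∈ fiber F ↔ p.1 = F :=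
  Sum.inr_injective.mem_set_image

lemma inl_notMem_fiber (F : NonFullUlt X n) (x : X) : (Sum.inl x : nKatetov X n) ∉ fiber F := by
  rintro ⟨p, -, h⟩
  exact Sum.inr_ne_inl h

lemma fiber_finite (F : NonFullUlt X n) : (fiber F).Finite :=
  ((range_sigmaMk F ▸ finite_range _ : (Sigma.fst ⁻¹' {F} : Set (KPoints X n)).Finite)).image _

/-- The set `U ∪ {p}`, written so that its trace on `X` is `U` by definition. -/
def insertTrace (p : KPoints X n) (U : Set X) : Set (nKatetov X n) :=
  Sum.elim U (· = p)

lemma isOpen_insertTrace {p : KPoints X n} {U : Set X} (hU : U ∈ p.1.val) :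
    IsOpen (insertTrace p U) := by
  refine ⟨p.1.property.1.1.isOpen_mem U hU, fun q hq => ?_⟩
  obtain rfl : q = p := hq
  exact hU

lemma continuous_of_mapsTo_fiber {g : nKatetov X n → nKatetov X n}
    (hgx : ∀ x : X, g (Sum.inl x) = Sum.inl x) (hg : ∀ F, MapsTo g (fiber F) (fiber F)) :
    Continuous g := by
  have hcomp : g ∘ Sum.inl = Sum.inl := funext hgx
  refine continuous_def.mpr fun V ⟨hVX, hVp⟩ => ⟨?_, fun q hq => ?_⟩
  · show IsOpen ((g ∘ Sum.inl) ⁻¹' V)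
    rw [hcomp]
    exact hVX
  · obtain ⟨⟨F, i⟩, rfl : F = q.1, hp⟩ := hg q.1 (inr_mem_fiber_iff.mpr rfl)
    show (g ∘ Sum.inl) ⁻¹' V ∈ q.1.val
    rw [hcomp]
    exact hVp ⟨q.1, i⟩ (hp ▸ hq)

variable {f : nKatetov X n → nKatetov X n}

lemma fst_eq_of_apply_inr_eq_inr (hf : Continuous f) (hfx : ∀ x : X, f (Sum.inl x) = Sum.inl x)
    {p q : KPoints X n} (hqp : f (Sum.inr q) = Sum.inr p) : p.1 = q.1 := by
  have hsub : p.1.val ⊆ q.1.val := fun U hU => by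
    have hopen := (isOpen_insertTrace hU).preimage hf
    have hq : Sum.inr q ∈ f ⁻¹' insertTrace p U := by
      show f (Sum.inr q) ∈ insertTrace p U
      rw [hqp]
      rfl
    refine q.1.property.1.1.superset_mem _ (hopen.2 q hq) U
      (p.1.property.1.1.isOpen_mem U hU) fun x hx => ?_
    change f (Sum.inl x) ∈ insertTrace p U at hx
    rwa [hfx] at hx
  exact Subtype.ext (p.1.property.1.2 q.1.val q.1.property.1.1 hsub).symm

lemma surjOn_fiber (hf : Continuous f) (hfs : Surjective f)
    (hfx : ∀ x : X, f (Sum.inl x) = Sum.inl x) (F : NonFullUlt X n) :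
    SurjOn f (fiber F) (fiber F) := by
  rintro _ ⟨p, hp, rfl⟩
  obtain ⟨x | q, hq⟩ := hfs (Sum.inr p)
  · exact absurd ((hfx x).symm.trans hq) Sum.inl_ne_inr
  · exact ⟨Sum.inr q,
      inr_mem_fiber_iff.mpr ((fst_eq_of_apply_inr_eq_inr hf hfx hq).symm.trans hp), hq⟩

lemma injective_of_bijOn_fiber (hfx : ∀ x : X, f (Sum.inl x) = Sum.inl x)
    (hbij : ∀ F, BijOn f (fiber F) (fiber F)) : Injective f := by
  have hmaps (q : KPoints X n) : f (Sum.inr q) ∈ fiber q.1 :=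
    (hbij q.1).mapsTo (inr_mem_fiber_iff.mpr rfl)
  rintro (x | q) (x' | q') h
  · rwa [hfx, hfx] at h
  · have hx := hmaps q'
    rw [← h, hfx] at hx
    exact absurd hx (inl_notMem_fiber _ _)
  · have hx := hmaps q
    rw [h, hfx] at hx
    exact absurd hx (inl_notMem_fiber _ _)
  · obtain ⟨p, hp, hpq⟩ := hmaps q
    have hq' := hmaps q'
    rw [← h, ← hpq] at hq'
    have hF : q'.1 = q.1 := (inr_mem_fiber_iff.mp hq').symm.trans hp
    exact (hbij q.1).injOn (inr_mem_fiber_iff.mpr rfl) (inr_mem_fiber_iff.mpr hF) h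

end nKatetov

open nKatetov

theorem stmt17_general {X : Type u} [TopologicalSpace X] (n : ℕ)
    (f : nKatetov X n → nKatetov X n)
    (hf : Continuous[nKatetovTop X n, nKatetovTop X n] f)
    (hfs : Function.Surjective f)
    (hfx : ∀ x : X, f (Sum.inl x) = Sum.inl x) :
    @IsHomeomorph (nKatetov X n) (nKatetov X n) (nKatetovTop X n) (nKatetovTop X n) f := by
  let _ : TopologicalSpace (nKatetov X n) := nKatetovTop X n
  have hbij (F : NonFullUlt X n) : BijOn f (fiber F) (fiber F) :=
    (fiber_finite F).bijOn_of_surjOn (surjOn_fiber hf hfs hfx F)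
  let e := Equiv.ofBijective f ⟨injective_of_bijOn_fiber hfx hbij, hfs⟩
  have hex (x : X) : e.symm (Sum.inl x) = Sum.inl x := e.symm_apply_eq.mpr (hfx x).symm
  have hemaps (F : NonFullUlt X n) : MapsTo e.symm (fiber F) (fiber F) :=
    (e.left_inv.leftInvOn _).mapsTo (hbij F).surjOn
  exact e.isHomeomorph_iff.mpr ⟨hf, continuous_of_mapsTo_fiber hex hemaps⟩

theorem stmt17 {X : Type u} [TopologicalSpace X] (n : ℕ) (hn : 2 ≤ n)
    (hX : NHausdorff X n) (f : nKatetov X n → nKatetov X n)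
    (hf : Continuous[nKatetovTop X n, nKatetovTop X n] f)
    (hfs : Function.Surjective f)
    (hfx : ∀ x : X, f (Sum.inl x) = Sum.inl x) :
    @IsHomeomorph (nKatetov X n) (nKatetov X n) (nKatetovTop X n) (nKatetovTop X n) f :=
  stmt17_general n f hf hfs hfx
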